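/- arXiv:1911.01744 — 2 statements merged into one kernel-verified Lean document; each statement's English description precedes it below -/
import Mathlib

section
/- Let ζ = a f f† + b f + c f† + d f† f in Cℓ_{1,1} (with complex a, b, c, d), ζ* = a f f† - b f - c f† + d f† f its main involution, and ξ = (f f† - f† f)ζ. Then ζ* ζ = ξ². -/
/-- For `ζ = a f f† + b f + c f† + d f† f`, its main involution
`ζ* = a f f† - b f - c f† + d f† f`, and `ξ = (f f† - f† f) ζ`, one has `ζ* ζ = ξ²`. -/
theorem stmt4 {A : Type*} [Ring A] [Algebra ℂ A] (f fd : A)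
    (hf : f * f = 0) (hfd : fd * fd = 0) (hffd : f * fd + fd * f = 1)
    (a b c d : ℂ) :
    (a • (f * fd) - b • f - c • fd + d • (fd * f)) *
        (a • (f * fd) + b • f + c • fd + d • (fd * f)) =
      ((f * fd - fd * f) * (a • (f * fd) + b • f + c • fd + d • (fd * f))) *
        ((f * fd - fd * f) * (a • (f * fd) + b • f + c • fd + d • (fd * f))) := by
  have hfdf : fd * f = 1 - f * fd := by linear_combination (norm := noncomm_ring) hffd
  have hpf : (f * fd) * f = f := by
    rw [mul_assoc, hfdf, mul_sub, mul_one, ← mul_assoc, hf, zero_mul, sub_zero]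
  have hfp : f * (f * fd) = 0 := by rw [← mul_assoc, hf, zero_mul]
  have hpd : (f * fd) * fd = 0 := by rw [mul_assoc, hfd, mul_zero]
  have hdp : fd * (f * fd) = fd := by
    rw [← mul_assoc, hfdf, sub_mul, one_mul, mul_assoc, hfd, mul_zero, sub_zero]
  have hpp : (f * fd) * (f * fd) = f * fd := by rw [← mul_assoc, hpf]
  rw [hfdf]
  noncomm_ring [hf, hfd, hpf, hfp, hpd, hdp, hpp, hfdf]
  module
end

section
/- Let m ≥ 1, k ≥ 0, γ ∈ ℝ, let H_k be a harmonic polynomial on ℝᵐ homogeneous of degree k, and set g(x) = ₀F₁(m/2 + k; -γ|x|²/4)·H_k(x). Then (Δ + γ)g = 0 on ℝᵐ ∖ {0}. -/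
open scoped Nat


section PS
variable (a : ℕ → ℝ) (C : ℝ)

lemma summable_nR (R : ℝ) : Summable (fun n : ℕ => (n : ℝ) * R ^ (n - 1) / n !) := by
  rw [← summable_nat_add_iff 1]
  have : (fun n : ℕ => ((n + 1 : ℕ) : ℝ) * R ^ (n + 1 - 1) / (n + 1)!)
      = fun n : ℕ => R ^ n / n ! := by
    funext n
    rw [Nat.add_sub_cancel, Nat.factorial_succ]
    push_cast
    rw [mul_comm ((n:ℝ)+1) (n ! : ℝ), ← div_div, mul_div_assoc]
    rw [mul_comm, mul_div_assoc, div_self (by positivity : ((n:ℝ)+1) ≠ 0), mul_one]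
  rw [this]
  exact Real.summable_pow_div_factorial R

lemma ps_summable (h : ∀ n, |a n| ≤ C / n !) (t : ℝ) :
    Summable (fun n => a n * t ^ n) := by
  apply Summable.of_norm_bounded (g := fun n : ℕ => C * (|t| ^ n / n !))
    ((Real.summable_pow_div_factorial |t|).mul_left C)
  intro n
  rw [norm_mul, norm_pow, Real.norm_eq_abs, Real.norm_eq_abs]
  calc |a n| * |t| ^ n ≤ C / n ! * |t| ^ n := by
        gcongr; exact h n
    _ = C * (|t| ^ n / n !) := by ring

lemma ps_summable_deriv (h : ∀ n, |a n| ≤ C / n !) (t : ℝ) :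
    Summable (fun n => a n * ((n : ℝ) * t ^ (n - 1))) := by
  apply Summable.of_norm_bounded (g := fun n : ℕ => C * ((n : ℝ) * |t| ^ (n - 1) / n !))
    (((summable_nR |t|)).mul_left C)
  intro n
  rw [Real.norm_eq_abs, abs_mul, abs_mul, abs_pow, Nat.abs_cast]
  calc |a n| * ((n:ℝ) * |t| ^ (n - 1)) ≤ C / n ! * ((n:ℝ) * |t| ^ (n - 1)) := by
        gcongr; exact h n
    _ = C * ((n:ℝ) * |t| ^ (n-1) / n !) := by ring

lemma ps_hasDerivAt (h : ∀ n, |a n| ≤ C / n !) (t : ℝ) :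
    HasDerivAt (fun y => ∑' n, a n * y ^ n) (∑' n, a n * ((n : ℝ) * t ^ (n - 1))) t := by
  set R := |t| + 1 with hR
  have hRpos : 0 < R := by positivity
  apply hasDerivAt_tsum_of_isPreconnected
    (u := fun n : ℕ => C * ((n : ℝ) * R ^ (n - 1) / n !))
    (g := fun (n : ℕ) (y : ℝ) => a n * y ^ n)
    (g' := fun (n : ℕ) (y : ℝ) => a n * ((n : ℝ) * y ^ (n - 1)))
    (((summable_nR R)).mul_left C) Metric.isOpen_ball
    ((convex_ball (0:ℝ) R).isPreconnected) (y₀ := t)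
  · intro n y _
    exact (hasDerivAt_pow n y).const_mul (a n)
  · intro n y hy
    rw [Real.norm_eq_abs, abs_mul, abs_mul, abs_pow, Nat.abs_cast]
    have hy' : |y| ≤ R := by
      rw [Metric.mem_ball] at hy
      simp only [Real.dist_eq, sub_zero] at hy
      linarith [hy.le]
    calc |a n| * ((n:ℝ) * |y| ^ (n - 1))
        ≤ C / n ! * ((n:ℝ) * |y| ^ (n - 1)) :=
          mul_le_mul_of_nonneg_right (h n) (by positivity)
      _ ≤ C / n ! * ((n:ℝ) * R ^ (n - 1)) := by
          refine mul_le_mul_of_nonneg_left ?_ (le_trans (abs_nonneg _) (h n))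
          exact mul_le_mul_of_nonneg_left
            (pow_le_pow_left₀ (abs_nonneg y) hy' _) (Nat.cast_nonneg n)
      _ = C * ((n : ℝ) * R ^ (n-1) / n !) := by ring
  · simp only [Metric.mem_ball, Real.dist_eq, sub_zero]
    linarith [abs_nonneg t]
  · exact ps_summable a C h t
  · simp only [Metric.mem_ball, Real.dist_eq, sub_zero]
    linarith [abs_nonneg t]

lemma ps_hasDerivAt' (h : ∀ n, |a n| ≤ C / n !) (t : ℝ) :
    HasDerivAt (fun y => ∑' n, a n * y ^ n)
      (∑' n : ℕ, ((n : ℝ) + 1) * a (n + 1) * t ^ n) t := by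
  have := ps_hasDerivAt a C h t
  convert this using 1
  rw [Summable.tsum_eq_zero_add (ps_summable_deriv a C h t)]
  simp only [Nat.cast_zero, zero_mul, mul_zero, zero_add]
  congr 1
  funext n
  rw [Nat.add_sub_cancel]
  push_cast
  ring

end PS

section Coef
variable (c : ℝ) (hc : (1:ℝ)/2 ≤ c)

/-- Pochhammer value -/
noncomputable def Pch (c : ℝ) (n : ℕ) : ℝ := (ascPochhammer ℝ n).eval c

lemma Pch_zero : Pch c 0 = 1 := by simp [Pch]

lemma Pch_succ (n : ℕ) : Pch c (n + 1) = Pch c n * (c + n) := by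
  simp [Pch, ascPochhammer_succ_eval]

include hc

lemma Pch_pos (n : ℕ) : 0 < Pch c n := by
  induction n with
  | zero => simp [Pch_zero]
  | succ n ih =>
    rw [Pch_succ]
    have : (0:ℝ) < c + n := by
      have := Nat.cast_nonneg (α := ℝ) n
      linarith
    positivity

lemma Pch_ge (n : ℕ) : (n ! : ℝ) ≤ 2 ^ n * Pch c n := by
  induction n with
  | zero => simp [Pch_zero]
  | succ n ih =>
    rw [Pch_succ, Nat.factorial_succ]
    push_cast
    have h1 : (0:ℝ) < Pch c n := Pch_pos c hc n
    have h2 : ((n:ℝ) + 1) ≤ 2 * (c + n) := by linarith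
    calc ((n:ℝ) + 1) * n ! ≤ (2 * (c + n)) * (2 ^ n * Pch c n) := by
          apply mul_le_mul h2 ih (by positivity) (by linarith)
      _ = 2 ^ (n + 1) * (Pch c n * (c + n)) := by ring

/-- coefficient of ₀F₁ -/
noncomputable def aC (c : ℝ) (n : ℕ) : ℝ := 1 / (n ! * Pch c n)

/-- coefficient of derivative -/
noncomputable def bC (c : ℝ) (n : ℕ) : ℝ := aC c n / (c + n)

omit hc in
lemma two_pow_le_fact (n : ℕ) : (2:ℝ) ^ n ≤ 2 * n ! := by
  induction n with
  | zero => norm_num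
  | succ n ih =>
    rcases Nat.eq_zero_or_pos n with h | h
    · subst h; norm_num
    · rw [Nat.factorial_succ]
      push_cast
      have h2 : (2:ℝ) ≤ (n:ℝ) + 1 := by
        have : (1:ℕ) ≤ n := h
        have h3 : (1:ℝ) ≤ (n:ℝ) := by exact_mod_cast this
        linarith
      calc (2:ℝ) ^ (n+1) = 2 * 2 ^ n := by ring
        _ ≤ 2 * (2 * n !) := by linarith
        _ ≤ 2 * (((n:ℝ)+1) * n !) := by
            have : (0:ℝ) < n ! := by positivity
            nlinarith

lemma aC_pos (n : ℕ) : 0 < aC c n := by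
  have := Pch_pos c hc n
  have : (0:ℝ) < n ! := by positivity
  unfold aC
  positivity

lemma aC_bound (n : ℕ) : |aC c n| ≤ 2 / n ! := by
  have hP := Pch_pos c hc n
  have hf : (0:ℝ) < n ! := by positivity
  rw [abs_of_pos (aC_pos c hc n)]
  unfold aC
  rw [div_le_div_iff₀ (by positivity) hf]
  have h1 := Pch_ge c hc n
  have h2 := two_pow_le_fact n
  calc (1:ℝ) * n ! ≤ 2 ^ n * Pch c n := by linarith
    _ ≤ (2 * n !) * Pch c n := by nlinarith
    _ = 2 * (n ! * Pch c n) := by ring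

lemma c_add_n_pos (n : ℕ) : (0:ℝ) < c + n := by
  have := Nat.cast_nonneg (α := ℝ) n
  linarith

lemma bC_pos (n : ℕ) : 0 < bC c n := div_pos (aC_pos c hc n) (c_add_n_pos c hc n)

lemma bC_bound (n : ℕ) : |bC c n| ≤ 4 / n ! := by
  have h1 := c_add_n_pos c hc n
  have h2 : (1:ℝ) / (c + n) ≤ 2 := by
    rw [div_le_iff₀ h1]
    have := Nat.cast_nonneg (α := ℝ) n
    linarith
  rw [abs_of_pos (bC_pos c hc n)]
  unfold bC
  have h3 := aC_bound c hc n
  rw [abs_of_pos (aC_pos c hc n)] at h3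
  have hf : (0:ℝ) < n ! := by positivity
  calc aC c n / (c + n) = aC c n * (1 / (c+n)) := by ring
    _ ≤ (2 / n !) * 2 := by
        apply mul_le_mul h3 h2 (by positivity) (by positivity)
    _ = 4 / n ! := by ring

/-- the key recurrence: (n+1) * a(n+1) = b n -/
lemma aC_succ (n : ℕ) : ((n:ℝ) + 1) * aC c (n+1) = bC c n := by
  have hP := Pch_pos c hc n
  have hcn := c_add_n_pos c hc n
  have hf : (0:ℝ) < n ! := by positivity
  unfold bC aC
  rw [Pch_succ, Nat.factorial_succ]
  push_cast
  field_simp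

/-- second-derivative coefficients -/
noncomputable def b2C (c : ℝ) (n : ℕ) : ℝ := ((n:ℝ) + 1) * bC c (n + 1)

lemma b2C_bound (n : ℕ) : |b2C c n| ≤ 4 / n ! := by
  have h := bC_bound c hc (n + 1)
  unfold b2C
  rw [abs_mul, abs_of_nonneg (by positivity : (0:ℝ) ≤ (n:ℝ)+1)]
  rw [Nat.factorial_succ] at h
  push_cast at h
  have hf : (0:ℝ) < n ! := by positivity
  have hn1 : (0:ℝ) < (n:ℝ) + 1 := by positivity
  calc ((n:ℝ)+1) * |bC c (n+1)| ≤ ((n:ℝ)+1) * (4 / (((n:ℝ)+1) * n !)) := by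
        apply mul_le_mul_of_nonneg_left h (by positivity)
    _ = 4 / n ! := by field_simp
end Coef

section FG
variable (c : ℝ) (hc : (1:ℝ)/2 ≤ c)

noncomputable def FF (c : ℝ) (t : ℝ) : ℝ := ∑' n : ℕ, aC c n * t ^ n
noncomputable def GG (c : ℝ) (t : ℝ) : ℝ := ∑' n : ℕ, bC c n * t ^ n
noncomputable def GG2 (c : ℝ) (t : ℝ) : ℝ := ∑' n : ℕ, b2C c n * t ^ n

include hc

lemma FF_hasDerivAt (t : ℝ) : HasDerivAt (FF c) (GG c t) t := by
  unfold FF GG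
  have h := ps_hasDerivAt' (aC c) 2 (aC_bound c hc) t
  have he : (∑' n : ℕ, ((n:ℝ) + 1) * aC c (n + 1) * t ^ n) = ∑' n : ℕ, bC c n * t ^ n := by
    congr 1
    funext n
    rw [aC_succ c hc n]
  rw [he] at h
  exact h

lemma GG_hasDerivAt (t : ℝ) : HasDerivAt (GG c) (GG2 c t) t := by
  unfold GG GG2 b2C
  exact ps_hasDerivAt' (bC c) 4 (bC_bound c hc) t

lemma FGG_ode (t : ℝ) : t * GG2 c t + c * GG c t = FF c t := by
  have hsa : Summable fun n : ℕ => aC c n * t ^ n := ps_summable _ 2 (aC_bound c hc) t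
  have hsb : Summable fun n : ℕ => bC c n * t ^ n := ps_summable _ 4 (bC_bound c hc) t
  have hsb2 : Summable fun n : ℕ => b2C c n * t ^ n := ps_summable _ 4 (b2C_bound c hc) t
  have hcn : ∀ n : ℕ, (0:ℝ) < c + n := c_add_n_pos c hc
  have h1 : t * GG2 c t = ∑' n : ℕ, b2C c n * t ^ (n + 1) := by
    unfold GG2
    rw [← tsum_mul_left]
    congr 1; funext n; ring
  have hs1 : Summable fun n : ℕ => b2C c n * t ^ (n + 1) := by
    apply (hsb2.mul_right t).congr
    intro n; ring
  have hs2 : Summable fun n : ℕ => c * (bC c (n + 1) * t ^ (n + 1)) := by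
    apply Summable.mul_left
    exact (summable_nat_add_iff (f := fun n : ℕ => bC c n * t ^ n) 1).mpr hsb
  have h2 : c * GG c t = c * bC c 0 + ∑' n : ℕ, c * (bC c (n + 1) * t ^ (n + 1)) := by
    unfold GG
    rw [Summable.tsum_eq_zero_add hsb, mul_add, tsum_mul_left, pow_zero, mul_one]
  rw [h1, h2, ← add_assoc, add_comm (∑' n : ℕ, b2C c n * t ^ (n+1)) (c * bC c 0), add_assoc,
    ← Summable.tsum_add hs1 hs2]
  have hb0 : c * bC c 0 = aC c 0 := by
    unfold bC
    rw [Nat.cast_zero, add_zero]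
    field_simp
  have hterm : ∀ n : ℕ, b2C c n * t ^ (n+1) + c * (bC c (n+1) * t ^ (n+1))
      = aC c (n+1) * t ^ (n+1) := by
    intro n
    have key : (((n:ℝ)+1) + c) * bC c (n+1) = aC c (n+1) := by
      unfold bC
      have h := hcn (n+1)
      push_cast at h ⊢
      field_simp
      ring
    unfold b2C
    calc ((n:ℝ)+1) * bC c (n+1) * t ^ (n+1) + c * (bC c (n+1) * t ^ (n+1))
        = ((((n:ℝ)+1) + c) * bC c (n+1)) * t ^ (n+1) := by ring
      _ = aC c (n+1) * t ^ (n+1) := by rw [key]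
  rw [tsum_congr hterm]
  unfold FF
  rw [Summable.tsum_eq_zero_add hsa, pow_zero, mul_one, hb0]

end FG
open MvPolynomial

lemma mv_hasFDerivAt {m : ℕ} (p : MvPolynomial (Fin m) ℝ) (x : Fin m → ℝ) :
    HasFDerivAt (fun y => MvPolynomial.eval y p)
      (∑ i, MvPolynomial.eval x (MvPolynomial.pderiv i p) •
        (ContinuousLinearMap.proj i : (Fin m → ℝ) →L[ℝ] ℝ)) x := by
  induction p using MvPolynomial.induction_on with
  | C a =>
    have : (fun y : Fin m → ℝ => MvPolynomial.eval y (C a : MvPolynomial (Fin m) ℝ)) =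
        fun _ => a := by funext y; simp
    rw [this]
    simp only [pderiv_C, map_zero, zero_smul, Finset.sum_const_zero]
    exact hasFDerivAt_const a x
  | add p q hp hq =>
    have : (fun y : Fin m → ℝ => MvPolynomial.eval y (p + q)) =
        fun y => MvPolynomial.eval y p + MvPolynomial.eval y q := by funext y; simp
    rw [this]
    simp only [map_add, add_smul, Finset.sum_add_distrib]
    exact hp.add hq
  | mul_X p i hp =>
    have hXi : HasFDerivAt (fun y : Fin m → ℝ => y i)
        (ContinuousLinearMap.proj i : (Fin m → ℝ) →L[ℝ] ℝ) x :=
      hasFDerivAt_apply (𝕜 := ℝ) i x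
    have h2 : (fun y : Fin m → ℝ => MvPolynomial.eval y (p * X i)) =
        fun y => MvPolynomial.eval y p * y i := by funext y; simp
    rw [h2]
    refine (hp.fun_mul hXi).congr_fderiv (Eq.symm ?_)
    ext v
    classical
    simp only [ContinuousLinearMap.sum_apply, ContinuousLinearMap.coe_smul', Pi.smul_apply,
      ContinuousLinearMap.proj_apply, ContinuousLinearMap.add_apply, smul_eq_mul, pderiv_mul,
      pderiv_X, map_add, map_mul, eval_X, Pi.single_apply]
    have hsingle : ∀ j : Fin m,
        MvPolynomial.eval x (if i = j then (1:MvPolynomial (Fin m) ℝ) else 0) = if i = j then 1 else 0 := by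
      intro j; split <;> simp
    calc ∑ j : Fin m, ((MvPolynomial.eval x (pderiv j p) * x i +
            MvPolynomial.eval x p * MvPolynomial.eval x (if i = j then (1:MvPolynomial (Fin m) ℝ) else 0)) * v j)
        = ∑ j : Fin m, (x i * (MvPolynomial.eval x (pderiv j p) * v j)
            + (if j = i then MvPolynomial.eval x p * v j else 0)) := by
          apply Finset.sum_congr rfl
          intro j _
          rcases eq_or_ne i j with h | h
          · subst h; simp; ring
          · simp [h, Ne.symm h]; ring
      _ = MvPolynomial.eval x p * v i + x i * ∑ j : Fin m, MvPolynomial.eval x (pderiv j p) * v j := by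
          rw [Finset.sum_add_distrib, Finset.sum_ite_eq' Finset.univ i
            (fun j => MvPolynomial.eval x p * v j), Finset.mul_sum]
          simp [add_comm]

lemma eval_smul_homog {m k : ℕ} (H : MvPolynomial (Fin m) ℝ) (hhom : H.IsHomogeneous k)
    (t : ℝ) (x : Fin m → ℝ) :
    MvPolynomial.eval (t • x) H = t ^ k * MvPolynomial.eval x H := by
  conv_lhs => rw [H.as_sum]
  conv_rhs => rw [H.as_sum]
  rw [map_sum, map_sum, Finset.mul_sum]
  apply Finset.sum_congr rfl
  intro d hd
  have hdeg : d.degree = k := by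
    have := hhom (MvPolynomial.mem_support_iff.mp hd)
    rw [Finsupp.degree_eq_weight_one]; exact this
  rw [MvPolynomial.eval_monomial, MvPolynomial.eval_monomial]
  unfold Finsupp.prod
  have h1 : ∏ i ∈ d.support, (t • x) i ^ d i
      = (∏ i ∈ d.support, t ^ d i) * ∏ i ∈ d.support, x i ^ d i := by
    rw [← Finset.prod_mul_distrib]
    apply Finset.prod_congr rfl
    intro i _
    simp [Pi.smul_apply, smul_eq_mul, mul_pow]
  rw [h1, Finset.prod_pow_eq_pow_sum]
  have : ∑ i ∈ d.support, d i = k := by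
    rw [← hdeg]; rfl
  rw [this]
  ring

lemma sum_smul_proj_single {m : ℕ} (c : Fin m → ℝ) (i : Fin m) :
    (∑ j, c j • (ContinuousLinearMap.proj j : (Fin m → ℝ) →L[ℝ] ℝ)) (Pi.single i 1) = c i := by
  classical
  rw [ContinuousLinearMap.sum_apply]
  have : ∀ j : Fin m, (c j • (ContinuousLinearMap.proj j : (Fin m → ℝ) →L[ℝ] ℝ))
      (Pi.single i 1) = if j = i then c j else 0 := by
    intro j
    rw [ContinuousLinearMap.smul_apply, ContinuousLinearMap.proj_apply, Pi.single_apply]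
    split <;> simp
  rw [Finset.sum_congr rfl (fun j _ => this j), Finset.sum_ite_eq' Finset.univ i c]
  simp

lemma euler_identity {m k : ℕ} (H : MvPolynomial (Fin m) ℝ) (hhom : H.IsHomogeneous k)
    (x : Fin m → ℝ) :
    ∑ i, x i * MvPolynomial.eval x (MvPolynomial.pderiv i H)
      = (k : ℝ) * MvPolynomial.eval x H := by
  have hsm : HasDerivAt (fun t : ℝ => t • x) x 1 := by
    simpa using (hasDerivAt_id (1:ℝ)).smul_const x
  have h1 : HasDerivAt (fun t : ℝ => MvPolynomial.eval (t • x) H)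
      ((∑ i, MvPolynomial.eval ((1:ℝ) • x) (MvPolynomial.pderiv i H) •
        (ContinuousLinearMap.proj i : (Fin m → ℝ) →L[ℝ] ℝ)) x) 1 :=
    (mv_hasFDerivAt H ((1:ℝ) • x)).comp_hasDerivAt (l := fun y => MvPolynomial.eval y H) 1 hsm
  have h2 : HasDerivAt (fun t : ℝ => t ^ k * MvPolynomial.eval x H)
      ((k : ℝ) * (1:ℝ) ^ (k-1) * MvPolynomial.eval x H) 1 :=
    (hasDerivAt_pow k 1).mul_const _
  have hfun : (fun t : ℝ => MvPolynomial.eval (t • x) H)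
      = fun t : ℝ => t ^ k * MvPolynomial.eval x H := by
    funext t; exact eval_smul_homog H hhom t x
  rw [hfun] at h1
  have := h1.unique h2
  rw [one_pow, mul_one] at this
  rw [ContinuousLinearMap.sum_apply] at this
  simp only [one_smul, ContinuousLinearMap.smul_apply, ContinuousLinearMap.proj_apply,
    smul_eq_mul] at this
  rw [← this]
  apply Finset.sum_congr rfl
  intro i _
  ring


/-- The (pointwise) Laplacian `Δ F(x) = Σᵢ ∂²F/∂xᵢ²(x)` on `ℝᵐ`. -/
noncomputable def lap {m : ℕ} (F : (Fin m → ℝ) → ℝ) (x : Fin m → ℝ) : ℝ :=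
  ∑ i, fderiv ℝ (fun y => fderiv ℝ F y (Pi.single i 1)) x (Pi.single i 1)

/-- `g(x) = ₀F₁(m/2 + k; -γ|x|²/4) · H_k(x)`. -/
noncomputable def solg (m k : ℕ) (γ : ℝ) (H : MvPolynomial (Fin m) ℝ)
    (x : Fin m → ℝ) : ℝ :=
  (∑' n : ℕ, (-γ * (∑ i, x i ^ 2) / 4) ^ n /
      ((n.factorial : ℝ) * (ascPochhammer ℝ n).eval ((m : ℝ) / 2 + (k : ℝ)))) *
    MvPolynomial.eval x H


lemma lap_eval {m : ℕ} (p : MvPolynomial (Fin m) ℝ) (x : Fin m → ℝ) :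
    lap (fun y => MvPolynomial.eval y p) x
      = ∑ i, MvPolynomial.eval x (MvPolynomial.pderiv i (MvPolynomial.pderiv i p)) := by
  unfold lap
  apply Finset.sum_congr rfl
  intro i _
  have h1 : (fun y => fderiv ℝ (fun z => MvPolynomial.eval z p) y (Pi.single i 1))
      = fun y => MvPolynomial.eval y (MvPolynomial.pderiv i p) := by
    funext y
    rw [(mv_hasFDerivAt p y).fderiv, sum_smul_proj_single]
  rw [h1, (mv_hasFDerivAt (MvPolynomial.pderiv i p) x).fderiv, sum_smul_proj_single]

/-- For `H_k` a harmonic polynomial homogeneous of degree `k`, the function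
`g(x) = ₀F₁(m/2 + k; -γ|x|²/4) H_k(x)` satisfies `(Δ + γ) g = 0` on `ℝᵐ ∖ {0}`. -/
theorem stmt9 (m k : ℕ) (hm : 1 ≤ m) (γ : ℝ) (H : MvPolynomial (Fin m) ℝ)
    (hhom : H.IsHomogeneous k)
    (hharm : ∀ x : Fin m → ℝ, lap (fun y => MvPolynomial.eval y H) x = 0) :
    ∀ x : Fin m → ℝ, x ≠ 0 →
      lap (solg m k γ H) x + γ * solg m k γ H x = 0 := by
  intro x _
  classical
  have hm' : (1:ℝ) ≤ (m:ℝ) := by exact_mod_cast hm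
  have hk0 : (0:ℝ) ≤ (k:ℝ) := Nat.cast_nonneg k
  set c : ℝ := (m:ℝ)/2 + (k:ℝ) with hcdef
  have hc : (1:ℝ)/2 ≤ c := by rw [hcdef]; linarith
  -- rewrite solg as FF ∘ s times eval
  have hsolgfun : solg m k γ H
      = fun y => FF c (-γ * (∑ j, y j ^ 2) / 4) * MvPolynomial.eval y H := by
    funext y
    unfold solg FF aC Pch
    congr 1
    apply tsum_congr
    intro n
    rw [div_eq_mul_inv, mul_comm, ← one_div]
  -- derivative of s
  have hS : ∀ y : Fin m → ℝ, HasFDerivAt (fun z : Fin m → ℝ => -γ * (∑ j, z j ^ 2) / 4)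
      (∑ j, (-γ/2 * y j) • (ContinuousLinearMap.proj j : (Fin m → ℝ) →L[ℝ] ℝ)) y := by
    intro y
    have hq : HasFDerivAt (fun z : Fin m → ℝ => ∑ j, z j ^ 2)
        (∑ j, (2 * y j) • (ContinuousLinearMap.proj j : (Fin m → ℝ) →L[ℝ] ℝ)) y := by
      apply HasFDerivAt.fun_sum
      intro j _
      have h0 : HasFDerivAt (fun z : Fin m → ℝ => z j)
          (ContinuousLinearMap.proj j : (Fin m → ℝ) →L[ℝ] ℝ) y :=
        hasFDerivAt_apply (𝕜 := ℝ) j y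
      have h1 := h0.mul h0
      have h2 : (fun z : Fin m → ℝ => z j ^ 2) = fun z => z j * z j := by
        funext z; ring
      rw [h2, two_mul, add_smul]
      exact h1
    have h3 := hq.const_mul (-γ/4)
    have h4 : (fun z : Fin m → ℝ => -γ * (∑ j, z j ^ 2) / 4)
        = fun z => -γ/4 * (∑ j, z j ^ 2) := by funext z; ring
    rw [h4]
    refine h3.congr_fderiv ?_
    rw [Finset.smul_sum]
    apply Finset.sum_congr rfl
    intro j _
    rw [smul_smul]
    congr 1
    ring
  -- first directional derivative of solg
  have hW : ∀ (i : Fin m) (y : Fin m → ℝ),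
      fderiv ℝ (solg m k γ H) y (Pi.single i 1)
        = MvPolynomial.eval y H * (GG c (-γ * (∑ j, y j ^ 2) / 4) * (-γ/2 * y i))
          + FF c (-γ * (∑ j, y j ^ 2) / 4)
            * MvPolynomial.eval y (MvPolynomial.pderiv i H) := by
    intro i y
    rw [hsolgfun]
    have hcomp : HasFDerivAt (fun z : Fin m → ℝ => FF c (-γ * (∑ j, z j ^ 2) / 4))
        (GG c (-γ * (∑ j, y j ^ 2) / 4) •
          (∑ j, (-γ/2 * y j) • (ContinuousLinearMap.proj j : (Fin m → ℝ) →L[ℝ] ℝ))) y := by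
      have := (FF_hasDerivAt c hc (-γ * (∑ j, y j ^ 2) / 4)).comp_hasFDerivAt y (hS y)
      simpa [Function.comp_def] using this
    have hmul := hcomp.fun_mul (mv_hasFDerivAt H y)
    rw [hmul.fderiv]
    simp only [ContinuousLinearMap.add_apply, ContinuousLinearMap.smul_apply,
      sum_smul_proj_single, smul_eq_mul]
    ring
  -- second directional derivative
  have hD2 : ∀ i : Fin m,
      fderiv ℝ (fun y => fderiv ℝ (solg m k γ H) y (Pi.single i 1)) x (Pi.single i 1)
        = -γ/2 * GG c (-γ * (∑ j, x j ^ 2) / 4) * MvPolynomial.eval x H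
          + γ^2/4 * x i ^ 2 * GG2 c (-γ * (∑ j, x j ^ 2) / 4) * MvPolynomial.eval x H
          + (-γ) * x i * GG c (-γ * (∑ j, x j ^ 2) / 4)
              * MvPolynomial.eval x (MvPolynomial.pderiv i H)
          + FF c (-γ * (∑ j, x j ^ 2) / 4)
              * MvPolynomial.eval x (MvPolynomial.pderiv i (MvPolynomial.pderiv i H)) := by
    intro i
    have hfun : (fun y => fderiv ℝ (solg m k γ H) y (Pi.single i 1))
        = fun y => MvPolynomial.eval y H * (GG c (-γ * (∑ j, y j ^ 2) / 4) * (-γ/2 * y i))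
          + FF c (-γ * (∑ j, y j ^ 2) / 4)
            * MvPolynomial.eval y (MvPolynomial.pderiv i H) := funext (hW i)
    rw [hfun]
    have hA : HasFDerivAt (fun y : Fin m → ℝ => GG c (-γ * (∑ j, y j ^ 2) / 4))
        (GG2 c (-γ * (∑ j, x j ^ 2) / 4) •
          (∑ j, (-γ/2 * x j) • (ContinuousLinearMap.proj j : (Fin m → ℝ) →L[ℝ] ℝ))) x := by
      have := (GG_hasDerivAt c hc (-γ * (∑ j, x j ^ 2) / 4)).comp_hasFDerivAt x (hS x)
      simpa [Function.comp_def] using this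
    have hFs : HasFDerivAt (fun y : Fin m → ℝ => FF c (-γ * (∑ j, y j ^ 2) / 4))
        (GG c (-γ * (∑ j, x j ^ 2) / 4) •
          (∑ j, (-γ/2 * x j) • (ContinuousLinearMap.proj j : (Fin m → ℝ) →L[ℝ] ℝ))) x := by
      have := (FF_hasDerivAt c hc (-γ * (∑ j, x j ^ 2) / 4)).comp_hasFDerivAt x (hS x)
      simpa [Function.comp_def] using this
    have hB : HasFDerivAt (fun y : Fin m → ℝ => -γ/2 * y i)
        ((-γ/2) • (ContinuousLinearMap.proj i : (Fin m → ℝ) →L[ℝ] ℝ)) x :=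
      (hasFDerivAt_apply (𝕜 := ℝ) i x).const_mul (-γ/2)
    have hAB := hA.fun_mul hB
    have h1 := (mv_hasFDerivAt H x).fun_mul hAB
    have h2 := hFs.fun_mul (mv_hasFDerivAt (MvPolynomial.pderiv i H) x)
    have hsum := h1.fun_add h2
    rw [hsum.fderiv]
    simp only [ContinuousLinearMap.add_apply, ContinuousLinearMap.smul_apply,
      sum_smul_proj_single, ContinuousLinearMap.proj_apply, Pi.single_eq_same, smul_eq_mul]
    ring
  -- assemble the Laplacian
  have hharm' : ∑ i, MvPolynomial.eval x (MvPolynomial.pderiv i (MvPolynomial.pderiv i H)) = 0 := by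
    rw [← lap_eval]; exact hharm x
  have heuler := euler_identity H hhom x
  have hode := FGG_ode c hc (-γ * (∑ j, x j ^ 2) / 4)
  have hlap : lap (solg m k γ H) x
      = ∑ i : Fin m, (-γ/2 * GG c (-γ * (∑ j, x j ^ 2) / 4) * MvPolynomial.eval x H
          + γ^2/4 * x i ^ 2 * GG2 c (-γ * (∑ j, x j ^ 2) / 4) * MvPolynomial.eval x H
          + (-γ) * x i * GG c (-γ * (∑ j, x j ^ 2) / 4)
              * MvPolynomial.eval x (MvPolynomial.pderiv i H)
          + FF c (-γ * (∑ j, x j ^ 2) / 4)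
              * MvPolynomial.eval x (MvPolynomial.pderiv i (MvPolynomial.pderiv i H))) := by
    unfold lap
    exact Finset.sum_congr rfl (fun i _ => hD2 i)
  set Q : ℝ := ∑ j, x j ^ 2 with hQdef
  rw [hlap, Finset.sum_add_distrib, Finset.sum_add_distrib, Finset.sum_add_distrib,
    Finset.sum_const, Finset.card_univ, Fintype.card_fin, nsmul_eq_mul]
  have e2 : ∑ i : Fin m, γ^2/4 * x i ^ 2 * GG2 c (-γ * Q / 4) * MvPolynomial.eval x H
      = γ^2/4 * GG2 c (-γ * Q / 4) * MvPolynomial.eval x H * Q := by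
    calc ∑ i : Fin m, γ^2/4 * x i ^ 2 * GG2 c (-γ * Q / 4) * MvPolynomial.eval x H
        = ∑ i : Fin m, (γ^2/4 * GG2 c (-γ * Q / 4) * MvPolynomial.eval x H) * x i ^ 2 := by
          apply Finset.sum_congr rfl; intro j _; ring
      _ = (γ^2/4 * GG2 c (-γ * Q / 4) * MvPolynomial.eval x H) * ∑ j : Fin m, x j ^ 2 :=
          (Finset.mul_sum _ _ _).symm
      _ = γ^2/4 * GG2 c (-γ * Q / 4) * MvPolynomial.eval x H * Q := by rw [← hQdef]
  have e3 : ∑ i : Fin m, (-γ) * x i * GG c (-γ * Q / 4)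
        * MvPolynomial.eval x (MvPolynomial.pderiv i H)
      = (-γ) * GG c (-γ * Q / 4) * ((k:ℝ) * MvPolynomial.eval x H) := by
    calc ∑ i : Fin m, (-γ) * x i * GG c (-γ * Q / 4)
          * MvPolynomial.eval x (MvPolynomial.pderiv i H)
        = ∑ i : Fin m, ((-γ) * GG c (-γ * Q / 4))
            * (x i * MvPolynomial.eval x (MvPolynomial.pderiv i H)) := by
          apply Finset.sum_congr rfl; intro j _; ring
      _ = ((-γ) * GG c (-γ * Q / 4))
            * ∑ i : Fin m, x i * MvPolynomial.eval x (MvPolynomial.pderiv i H) :=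
          (Finset.mul_sum _ _ _).symm
      _ = (-γ) * GG c (-γ * Q / 4) * ((k:ℝ) * MvPolynomial.eval x H) := by rw [heuler]
  have e4 : ∑ i : Fin m, FF c (-γ * Q / 4)
        * MvPolynomial.eval x (MvPolynomial.pderiv i (MvPolynomial.pderiv i H))
      = 0 := by
    rw [← Finset.mul_sum, hharm', mul_zero]
  rw [e2, e3, e4]
  simp only [hsolgfun]
  rw [← hQdef]
  linear_combination (-γ * MvPolynomial.eval x H) * hode
    + (γ * GG c (-γ * Q / 4) * MvPolynomial.eval x H) * hcdef
end
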